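/- Let θ : ℤ → ℝ be a nondecreasing sequence with θ_n ≥ 1 and θ_{n+1}/θ_n ≤ T for some T ≥ 1 and all n ∈ ℤ. Let M = ∏_{j∈ℤ}(1 + 2^{-|j|}) and suppose (γ_k)_{k∈ℤ} are nonnegative reals with γ_k < 1/(T(2^{|k|+1}+1)) and Σ_{k∈ℤ} γ_k < 1/(TM). Then for every n ∈ ℤ: Σ_{k<n} (θ_{k+1}/θ_n) γ_k ∏_{j=k}^{n-1} ((θ_{j+1}/θ_j)/(1 - (θ_{j+1}/θ_j)γ_j)) + Σ_{k>n} γ_k ∏_{j=n}^{k-1}(1+γ_j) + γ_n < 1. -/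

import Mathlib

/-! Every term on the left-hand side is at most `T M γ_k`, so the whole expression is at most
`T M ∑ γ_k < 1`. For `k > n` this holds because `γ_j ≤ 2^{-|j|}`, whence
`∏ (1 + γ_j) ≤ M`. For `k < n`, the bound `(θ_{j+1}/θ_j) γ_j ≤ T γ_j < 1/(2^{|j|+1}+1)` makes
each factor at most `(θ_{j+1}/θ_j)(1 + 2^{-|j|})`; the ratios telescope to `θ_n/θ_k`, which
cancels the prefactor `θ_{k+1}/θ_n` up to `θ_{k+1}/θ_k ≤ T`. -/

open Finset

lemma prod_Ico_div_int {G : Type*} [CommGroupWithZero G] {f : ℤ → G} (hf : ∀ n, f n ≠ 0)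
    {k m : ℤ} (hkm : k ≤ m) : ∏ j ∈ Ico k m, f (j + 1) / f j = f m / f k := by
  induction m, hkm using Int.leInduction with
  | base => simp [div_self (hf k)]
  | succ m hkm ih =>
    rw [← insert_Ico_right_eq_Ico_add_one hkm, prod_insert right_notMem_Ico, ih]
    field_simp [hf m]

lemma tsum_lt_add_tsum_gt_add_self {ι α : Type*} [LinearOrder ι] [AddCommGroup α] [UniformSpace α]
    [IsUniformAddGroup α] [CompleteSpace α] [T2Space α] {f : ι → α} (hf : Summable f) (n : ι) :
    ∑' k : {k // k < n}, f k + ∑' k : {k // n < k}, f k + f n = ∑' k, f k := by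
  have hpiece : ∀ k, {k | k < n}.indicator f k + {k | n < k}.indicator f k
      + ({n} : Set ι).indicator f k = f k := by
    intro k
    rcases lt_trichotomy k n with h | rfl | h
    · simp [h, h.not_gt, h.ne]
    · simp
    · simp [h, h.not_gt, h.ne']
  have hlt : ∑' k : {k // k < n}, f k = ∑' k, {k | k < n}.indicator f k := tsum_subtype _ _
  have hgt : ∑' k : {k // n < k}, f k = ∑' k, {k | n < k}.indicator f k := tsum_subtype _ _
  rw [hlt, hgt, ← tsum_singleton n f, _root_.tsum_subtype,
    ← (hf.indicator _).tsum_add (hf.indicator _),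
    ← ((hf.indicator _).add (hf.indicator _)).tsum_add (hf.indicator _)]
  exact tsum_congr hpiece

lemma tsum_le_mul_tsum_of_le {ι : Type*} {f g : ι → ℝ} {c : ℝ} (hf : ∀ i, 0 ≤ f i)
    (hfg : ∀ i, f i ≤ c * g i) (hg : Summable g) : ∑' i, f i ≤ c * ∑' i, g i := by
  rw [← tsum_mul_left]
  exact (Summable.of_nonneg_of_le hf hfg (hg.mul_left c)).tsum_le_tsum hfg (hg.mul_left c)

lemma prod_one_add_le_tprod_one_add {ι : Type*} {f : ι → ℝ} (hf0 : ∀ i, 0 ≤ f i)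
    (hf : Summable f) (s : Finset ι) : ∏ i ∈ s, (1 + f i) ≤ ∏' i, (1 + f i) := by
  refine Monotone.ge_of_tendsto (fun s t hst ↦ ?_)
    (Real.multipliable_one_add_of_summable hf).hasProd s
  exact prod_le_prod_of_subset_of_one_le hst (fun i _ ↦ by linarith [hf0 i])
    fun i _ _ ↦ le_add_of_nonneg_right (hf0 i)

lemma summable_two_zpow_neg_abs : Summable fun j : ℤ ↦ (2 : ℝ) ^ (-|j|) := by
  apply Summable.of_nat_of_neg <;>
  · refine summable_geometric_two.congr fun m ↦ ?_
    simp [zpow_neg, ← inv_pow]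

lemma prod_le_tprod_one_add_two_zpow_neg_abs (s : Finset ℤ) :
    ∏ j ∈ s, (1 + (2 : ℝ) ^ (-|j|)) ≤ ∏' j : ℤ, (1 + (2 : ℝ) ^ (-|j|)) :=
  prod_one_add_le_tprod_one_add (fun j ↦ by positivity) summable_two_zpow_neg_abs s

lemma one_le_tprod_one_add_two_zpow_neg_abs : 1 ≤ ∏' j : ℤ, (1 + (2 : ℝ) ^ (-|j|)) := by
  simpa using prod_le_tprod_one_add_two_zpow_neg_abs ∅

lemma le_two_zpow_neg_abs {T x : ℝ} {k : ℤ} (hT : 1 ≤ T)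
    (hx : x < 1 / (T * (2 ^ (|k| + 1) + 1))) : x ≤ 2 ^ (-|k|) := by
  have hpow : (0 : ℝ) < 2 ^ |k| := by positivity
  have hle : (2 : ℝ) ^ |k| ≤ T * (2 ^ (|k| + 1) + 1) := by
    rw [zpow_add_one₀ two_ne_zero]; nlinarith
  calc x ≤ 1 / 2 ^ |k| := hx.le.trans (one_div_le_one_div_of_le hpow hle)
    _ = 2 ^ (-|k|) := by rw [zpow_neg, one_div]

lemma mul_lt_one_div_of_lt_one_div_mul {r T x b : ℝ} (hT : 0 < T) (hr : r ≤ T) (hx0 : 0 ≤ x)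
    (hx : x < 1 / (T * b)) : r * x < 1 / b := by
  calc r * x ≤ T * x := mul_le_mul_of_nonneg_right hr hx0
    _ < T * (1 / (T * b)) := mul_lt_mul_of_pos_left hx hT
    _ = 1 / b := by field_simp

lemma one_sub_pos_of_lt_one_div_add_one {a c : ℝ} (ha : 0 ≤ a) (hc : c < 1 / (a + 1)) :
    0 < 1 - c := by
  have : 1 / (a + 1) ≤ 1 := (div_le_one (by linarith)).2 (by linarith)
  linarith

lemma one_div_one_sub_le_one_add_one_div {a c : ℝ} (ha : 0 < a) (hc : c < 1 / (a + 1)) :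
    1 / (1 - c) ≤ 1 + 1 / a := by
  have hc' : c * (a + 1) < 1 := by rwa [lt_div_iff₀ (by linarith)] at hc
  rw [div_le_iff₀ (one_sub_pos_of_lt_one_div_add_one ha.le hc)]
  field_simp
  nlinarith

lemma one_sub_mul_pos_of_lt {r T x : ℝ} {j : ℤ} (hT : 0 < T) (hr : r ≤ T) (hx0 : 0 ≤ x)
    (hx : x < 1 / (T * (2 ^ (|j| + 1) + 1))) : 0 < 1 - r * x :=
  one_sub_pos_of_lt_one_div_add_one (by positivity) (mul_lt_one_div_of_lt_one_div_mul hT hr hx0 hx)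

lemma div_one_sub_mul_le_mul_one_add {r T x : ℝ} {j : ℤ} (hT : 0 < T) (hr0 : 0 ≤ r)
    (hr : r ≤ T) (hx0 : 0 ≤ x) (hx : x < 1 / (T * (2 ^ (|j| + 1) + 1))) :
    r / (1 - r * x) ≤ r * (1 + 2 ^ (-|j|)) := by
  have hinv : 1 / (1 - r * x) ≤ 1 + 1 / 2 ^ (|j| + 1) := one_div_one_sub_le_one_add_one_div
    (by positivity) (mul_lt_one_div_of_lt_one_div_mul hT hr hx0 hx)
  have hpow : (1 : ℝ) / 2 ^ (|j| + 1) ≤ 2 ^ (-|j|) := by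
    rw [one_div, ← zpow_neg]
    exact zpow_le_zpow_right₀ one_le_two (by omega)
  rw [div_eq_mul_one_div]
  gcongr
  linarith

section

variable {θ γ : ℤ → ℝ} {T : ℝ}

lemma ratio_div_one_sub_mul_nonneg (hθ : ∀ n, 0 < θ n) (hθ3 : ∀ n, θ (n + 1) / θ n ≤ T)
    (hγ0 : ∀ k, 0 ≤ γ k) (hγ1 : ∀ k : ℤ, γ k < 1 / (T * (2 ^ (|k| + 1) + 1))) (j : ℤ) :
    0 ≤ θ (j + 1) / θ j / (1 - θ (j + 1) / θ j * γ j) := by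
  have hT : 0 < T := (div_pos (hθ _) (hθ j)).trans_le (hθ3 j)
  exact div_nonneg (div_pos (hθ _) (hθ j)).le
    (one_sub_mul_pos_of_lt hT (hθ3 j) (hγ0 j) (hγ1 j)).le

lemma prod_Ico_ratio_div_le (hθ : ∀ n, 0 < θ n) (hθ3 : ∀ n, θ (n + 1) / θ n ≤ T)
    (hγ0 : ∀ k, 0 ≤ γ k) (hγ1 : ∀ k : ℤ, γ k < 1 / (T * (2 ^ (|k| + 1) + 1))) {k n : ℤ}
    (hkn : k ≤ n) :
    ∏ j ∈ Ico k n, θ (j + 1) / θ j / (1 - θ (j + 1) / θ j * γ j)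
      ≤ θ n / θ k * ∏' j : ℤ, (1 + (2 : ℝ) ^ (-|j|)) := by
  have hT : 0 < T := (div_pos (hθ _) (hθ 0)).trans_le (hθ3 0)
  calc ∏ j ∈ Ico k n, θ (j + 1) / θ j / (1 - θ (j + 1) / θ j * γ j)
      ≤ ∏ j ∈ Ico k n, θ (j + 1) / θ j * (1 + (2 : ℝ) ^ (-|j|)) :=
        prod_le_prod (fun j _ ↦ ratio_div_one_sub_mul_nonneg hθ hθ3 hγ0 hγ1 j) fun j _ ↦
          div_one_sub_mul_le_mul_one_add hT (div_pos (hθ _) (hθ j)).le (hθ3 j) (hγ0 j) (hγ1 j)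
    _ = θ n / θ k * ∏ j ∈ Ico k n, (1 + (2 : ℝ) ^ (-|j|)) := by
        rw [prod_mul_distrib, prod_Ico_div_int (fun n ↦ (hθ n).ne') hkn]
    _ ≤ θ n / θ k * ∏' j : ℤ, (1 + (2 : ℝ) ^ (-|j|)) := by
        have := hθ n; have := hθ k
        gcongr
        exact prod_le_tprod_one_add_two_zpow_neg_abs _

lemma ratio_mul_prod_Ico_le (hθ : ∀ n, 0 < θ n) (hθ3 : ∀ n, θ (n + 1) / θ n ≤ T)
    (hγ0 : ∀ k, 0 ≤ γ k) (hγ1 : ∀ k : ℤ, γ k < 1 / (T * (2 ^ (|k| + 1) + 1))) {k n : ℤ}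
    (hkn : k < n) :
    θ (k + 1) / θ n * γ k * ∏ j ∈ Ico k n, θ (j + 1) / θ j / (1 - θ (j + 1) / θ j * γ j)
      ≤ T * (∏' j : ℤ, (1 + (2 : ℝ) ^ (-|j|))) * γ k := by
  have := hθ n; have := hθ k; have := hθ (k + 1); have := hγ0 k
  have := one_le_tprod_one_add_two_zpow_neg_abs
  calc θ (k + 1) / θ n * γ k * ∏ j ∈ Ico k n, θ (j + 1) / θ j / (1 - θ (j + 1) / θ j * γ j)
      ≤ θ (k + 1) / θ n * γ k * (θ n / θ k * ∏' j : ℤ, (1 + (2 : ℝ) ^ (-|j|))) := by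
        gcongr
        exact prod_Ico_ratio_div_le hθ hθ3 hγ0 hγ1 hkn.le
    _ = θ (k + 1) / θ k * (∏' j : ℤ, (1 + (2 : ℝ) ^ (-|j|))) * γ k := by
        field_simp
    _ ≤ T * (∏' j : ℤ, (1 + (2 : ℝ) ^ (-|j|))) * γ k := by
        gcongr
        exact hθ3 k

lemma mul_prod_Ico_one_add_le (hT : 1 ≤ T) (hγ0 : ∀ k, 0 ≤ γ k)
    (hγ1 : ∀ k : ℤ, γ k < 1 / (T * (2 ^ (|k| + 1) + 1))) (n k : ℤ) :
    γ k * ∏ j ∈ Ico n k, (1 + γ j) ≤ T * (∏' j : ℤ, (1 + (2 : ℝ) ^ (-|j|))) * γ k := by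
  have hprod : ∏ j ∈ Ico n k, (1 + γ j) ≤ ∏' j : ℤ, (1 + (2 : ℝ) ^ (-|j|)) :=
    (prod_le_prod (fun j _ ↦ by linarith [hγ0 j]) fun j _ ↦
      add_le_add_right (le_two_zpow_neg_abs hT (hγ1 j)) 1).trans
      (prod_le_tprod_one_add_two_zpow_neg_abs _)
  have := one_le_tprod_one_add_two_zpow_neg_abs
  have := hγ0 k
  calc γ k * ∏ j ∈ Ico n k, (1 + γ j) ≤ 1 * (∏' j : ℤ, (1 + (2 : ℝ) ^ (-|j|))) * γ k := by
        rw [one_mul, mul_comm]; gcongr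
    _ ≤ T * (∏' j : ℤ, (1 + (2 : ℝ) ^ (-|j|))) * γ k := by gcongr

end

theorem stmt_19_general (θ : ℤ → ℝ) (T : ℝ) (hT : 1 ≤ T)
    (hθ1 : ∀ n : ℤ, 1 ≤ θ n)
    (hθ3 : ∀ n : ℤ, θ (n + 1) / θ n ≤ T)
    (γ : ℤ → ℝ) (hγ0 : ∀ k, 0 ≤ γ k)
    (hγ1 : ∀ k : ℤ, γ k < 1 / (T * (2 ^ (|k| + 1) + 1)))
    (hγ2 : ∑' k : ℤ, γ k < 1 / (T * ∏' j : ℤ, (1 + (2 : ℝ) ^ (-|j|)))) :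
    ∀ n : ℤ,
      (∑' k : {k : ℤ // k < n}, (θ ((k : ℤ) + 1) / θ n) * γ k *
          ∏ j ∈ Finset.Ico (k : ℤ) n, ((θ (j + 1) / θ j) / (1 - (θ (j + 1) / θ j) * γ j))) +
      (∑' k : {k : ℤ // n < k}, γ k * ∏ j ∈ Finset.Ico n (k : ℤ), (1 + γ j)) +
      γ n < 1 := by
  intro n
  have hθ : ∀ n, 0 < θ n := fun n ↦ one_pos.trans_le (hθ1 n)
  set M := ∏' j : ℤ, (1 + (2 : ℝ) ^ (-|j|))
  have hTM : 1 ≤ T * M := one_le_mul_of_one_le_of_one_le hT one_le_tprod_one_add_two_zpow_neg_abs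
  have hγ : Summable γ :=
    summable_two_zpow_neg_abs.of_nonneg_of_le hγ0 fun k ↦ le_two_zpow_neg_abs hT (hγ1 k)
  have hleft := tsum_le_mul_tsum_of_le
    (fun k : {k : ℤ // k < n} ↦ mul_nonneg (mul_nonneg (div_pos (hθ _) (hθ n)).le (hγ0 k))
      (prod_nonneg fun j _ ↦ ratio_div_one_sub_mul_nonneg hθ hθ3 hγ0 hγ1 j))
    (fun k ↦ ratio_mul_prod_Ico_le hθ hθ3 hγ0 hγ1 k.2) (hγ.subtype {k | k < n})
  have hright := tsum_le_mul_tsum_of_le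
    (fun k : {k : ℤ // n < k} ↦ mul_nonneg (hγ0 k) (prod_nonneg fun j _ ↦ by linarith [hγ0 j]))
    (fun k ↦ mul_prod_Ico_one_add_le hT hγ0 hγ1 n k) (hγ.subtype {k | n < k})
  calc _ ≤ T * M * ∑' k : {k : ℤ // k < n}, γ k + T * M * ∑' k : {k : ℤ // n < k}, γ k
          + T * M * γ n := add_le_add (add_le_add hleft hright) (le_mul_of_one_le_left (hγ0 n) hTM)
    _ = T * M * ∑' k, γ k := by rw [← tsum_lt_add_tsum_gt_add_self hγ n]; ring
    _ < 1 := by rwa [lt_div_iff₀' (by positivity)] at hγ2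

theorem stmt_19 (θ : ℤ → ℝ) (T : ℝ) (hT : 1 ≤ T)
    (hθ1 : ∀ n : ℤ, 1 ≤ θ n)
    (hθ2 : ∀ n : ℤ, θ n ≤ θ (n + 1))
    (hθ3 : ∀ n : ℤ, θ (n + 1) / θ n ≤ T)
    (γ : ℤ → ℝ) (hγ0 : ∀ k, 0 ≤ γ k)
    (hγ1 : ∀ k : ℤ, γ k < 1 / (T * (2 ^ (|k| + 1) + 1)))
    (hγ2 : ∑' k : ℤ, γ k < 1 / (T * ∏' j : ℤ, (1 + (2 : ℝ) ^ (-|j|)))) :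
    ∀ n : ℤ,
      (∑' k : {k : ℤ // k < n}, (θ ((k : ℤ) + 1) / θ n) * γ k *
          ∏ j ∈ Finset.Ico (k : ℤ) n, ((θ (j + 1) / θ j) / (1 - (θ (j + 1) / θ j) * γ j))) +
      (∑' k : {k : ℤ // n < k}, γ k * ∏ j ∈ Finset.Ico n (k : ℤ), (1 + γ j)) +
      γ n < 1 :=
  stmt_19_general θ T hT hθ1 hθ3 γ hγ0 hγ1 hγ2
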